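/- arXiv:0806.2587 — 6 statements merged into one kernel-verified Lean document; each statement's English description precedes it below -/
import Mathlib

section
/- Let w > 0 be real, z ∈ ℂ, and let x, y ∈ ℂ satisfy |x|^2 + |y|^2 = 1. Set T = [[w, z],[0, w^{-1}]] and U = [[x, -conj(y)],[y, conj(x)]] ∈ SU(2). Then there exist U' ∈ SU(2), a real number w' > 0 and z' ∈ ℂ with T·U = U'·[[w', z'],[0, w'^{-1}]], and these are uniquely determined, with w' = sqrt(w^{-2}|y|^2 + |wx + zy|^2) and w'·z' = (w·conj(x) + conj(z)·conj(y))·(z·conj(x) - w·conj(y)) + w^{-2}·conj(x)·conj(y). (This is the explicit formula for the dressing action of SU(2) on SU₂⋆.) -/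
/-!
Since `det (T U) = 1`, the claim is the Iwasawa factorization `M = U' R` of a matrix
`M ∈ SL₂(ℂ)`, with `R = [[w', z'], [0, w'⁻¹]]`. Unitarity of `U'` gives `Mᴴ M = Rᴴ R`, whose first
row reads `w'² = |M₀₀|² + |M₁₀|²` and `w' z' = conj M₀₀ M₀₁ + conj M₁₀ M₁₁`; this determines `w'`
and `z'`, and then `U' = M R⁻¹`. Conversely, for these values `Mᴴ M = Rᴴ R` holds entrywise, the
last entry by Lagrange's identity and `det M = 1`, so `M R⁻¹` is unitary.
-/

open Matrix Complex ComplexConjugate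

noncomputable section

def suStarMk (v : ℝ) (z : ℂ) : Matrix (Fin 2) (Fin 2) ℂ := !![(v : ℂ), z; 0, (v : ℂ)⁻¹]

lemma suStarMk_mul (v v' : ℝ) (z z' : ℂ) :
    suStarMk v z * suStarMk v' z' = suStarMk (v * v') (v * z' + z * (v' : ℂ)⁻¹) := by
  ext i j
  fin_cases i <;> fin_cases j <;> simp [suStarMk, mul_comm]

lemma suStarMk_one_zero : suStarMk 1 0 = 1 := by
  ext i j
  fin_cases i <;> fin_cases j <;> simp [suStarMk]

lemma suStarMk_mul_suStarMk_inv {v : ℝ} (hv : v ≠ 0) (z : ℂ) :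
    suStarMk v z * suStarMk v⁻¹ (-z) = 1 := by
  rw [suStarMk_mul, mul_inv_cancel₀ hv, ← suStarMk_one_zero]
  congr 1
  push_cast
  rw [inv_inv]
  ring

lemma suStarMk_inv_mul_suStarMk {v : ℝ} (hv : v ≠ 0) (z : ℂ) :
    suStarMk v⁻¹ (-z) * suStarMk v z = 1 := by
  rw [suStarMk_mul, inv_mul_cancel₀ hv, ← suStarMk_one_zero]
  congr 1
  push_cast
  ring

lemma det_suStarMk {v : ℝ} (hv : v ≠ 0) (z : ℂ) : (suStarMk v z).det = 1 := by
  simp [suStarMk, det_fin_two_of, hv]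

lemma conjTranspose_suStarMk_mul_self (v : ℝ) (z : ℂ) :
    (suStarMk v z)ᴴ * suStarMk v z =
      !![(v : ℂ) ^ 2, v * z; v * conj z, conj z * z + (v : ℂ)⁻¹ ^ 2] := by
  ext i j
  fin_cases i <;> fin_cases j <;>
    simp only [suStarMk, Fin.zero_eta, Fin.mk_one, Fin.isValue, mul_apply, conjTranspose_apply,
      of_apply, cons_val', cons_val_zero, cons_val_one, cons_val_fin_one, RCLike.star_def,
      Fin.sum_univ_two, conj_ofReal, map_zero, map_inv₀, mul_zero, zero_mul, add_zero, inv_pow] <;>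
    ring

lemma conjTranspose_mul_self_of_unitary_mul {m n α : Type*} [Fintype m] [DecidableEq m]
    [Fintype n] [Semiring α] [StarRing α] {U : Matrix m m α} (hU : Uᴴ * U = 1)
    (A : Matrix m n α) : (U * A)ᴴ * (U * A) = Aᴴ * A := by
  rw [conjTranspose_mul, Matrix.mul_assoc, ← Matrix.mul_assoc Uᴴ, hU, Matrix.one_mul]

def iwasawaScale (M : Matrix (Fin 2) (Fin 2) ℂ) : ℝ := √(normSq (M 0 0) + normSq (M 1 0))

def iwasawaShear (M : Matrix (Fin 2) (Fin 2) ℂ) : ℂ :=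
  (conj (M 0 0) * M 0 1 + conj (M 1 0) * M 1 1) / iwasawaScale M

lemma iwasawaScale_pos {M : Matrix (Fin 2) (Fin 2) ℂ} (hM : M.det = 1) : 0 < iwasawaScale M := by
  refine Real.sqrt_pos.2
    (lt_of_le_of_ne (add_nonneg (normSq_nonneg _) (normSq_nonneg _)) fun h => ?_)
  have hcol : M 0 0 = 0 ∧ M 1 0 = 0 := by
    rw [eq_comm, add_eq_zero_iff_of_nonneg (normSq_nonneg _) (normSq_nonneg _)] at h
    exact ⟨normSq_eq_zero.1 h.1, normSq_eq_zero.1 h.2⟩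
  simp [det_fin_two, hcol] at hM

lemma ofReal_iwasawaScale_sq (M : Matrix (Fin 2) (Fin 2) ℂ) :
    (iwasawaScale M : ℂ) ^ 2 = conj (M 0 0) * M 0 0 + conj (M 1 0) * M 1 0 := by
  rw [← ofReal_pow, iwasawaScale, Real.sq_sqrt (add_nonneg (normSq_nonneg _) (normSq_nonneg _))]
  push_cast
  rw [normSq_eq_conj_mul_self, normSq_eq_conj_mul_self]

lemma iwasawaScale_mul_iwasawaShear {M : Matrix (Fin 2) (Fin 2) ℂ} (hM : M.det = 1) :
    (iwasawaScale M : ℂ) * iwasawaShear M = conj (M 0 0) * M 0 1 + conj (M 1 0) * M 1 1 := by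
  have hn : (iwasawaScale M : ℂ) ≠ 0 := ofReal_ne_zero.2 (iwasawaScale_pos hM).ne'
  exact mul_div_cancel₀ _ hn

lemma conjTranspose_mul_self_eq_suStarMk {M : Matrix (Fin 2) (Fin 2) ℂ} (hM : M.det = 1) :
    Mᴴ * M = (suStarMk (iwasawaScale M) (iwasawaShear M))ᴴ *
      suStarMk (iwasawaScale M) (iwasawaShear M) := by
  have hn : (iwasawaScale M : ℂ) ≠ 0 := ofReal_ne_zero.2 (iwasawaScale_pos hM).ne'
  have hn2 := ofReal_iwasawaScale_sq M
  have hnz := iwasawaScale_mul_iwasawaShear hM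
  have hnz' : (iwasawaScale M : ℂ) * conj (iwasawaShear M) =
      conj (M 0 1) * M 0 0 + conj (M 1 1) * M 1 0 := by
    simpa [mul_comm] using congrArg conj hnz
  have hdet : M 0 0 * M 1 1 - M 0 1 * M 1 0 = 1 := by rwa [← det_fin_two]
  have hdet' : conj (M 0 0) * conj (M 1 1) - conj (M 0 1) * conj (M 1 0) = 1 := by
    simpa using congrArg conj hdet
  rw [conjTranspose_suStarMk_mul_self]
  ext i j
  fin_cases i <;> fin_cases j <;>
    simp only [Fin.zero_eta, Fin.mk_one, Fin.isValue, mul_apply, conjTranspose_apply,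
      RCLike.star_def, Fin.sum_univ_two, inv_pow, of_apply, cons_val', cons_val_zero, cons_val_one,
      cons_val_fin_one]
  · linear_combination -hn2
  · linear_combination -hnz
  · linear_combination -hnz'
  · have lagrange : (conj (M 0 0) * M 0 0 + conj (M 1 0) * M 1 0) *
          (conj (M 0 1) * M 0 1 + conj (M 1 1) * M 1 1) =
        (conj (M 0 0) * M 0 1 + conj (M 1 0) * M 1 1) *
          (conj (M 0 1) * M 0 0 + conj (M 1 1) * M 1 0) +
        (conj (M 0 0) * conj (M 1 1) - conj (M 0 1) * conj (M 1 0)) *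
          (M 0 0 * M 1 1 - M 0 1 * M 1 0) := by ring
    rw [← hn2, ← hnz, ← hnz', hdet, hdet'] at lagrange
    field_simp
    linear_combination lagrange

theorem exists_unitary_mul_suStarMk {M : Matrix (Fin 2) (Fin 2) ℂ} (hM : M.det = 1) :
    ∃ U : Matrix (Fin 2) (Fin 2) ℂ,
      Uᴴ * U = 1 ∧ U.det = 1 ∧ M = U * suStarMk (iwasawaScale M) (iwasawaShear M) := by
  set R := suStarMk (iwasawaScale M) (iwasawaShear M)
  set S := suStarMk (iwasawaScale M)⁻¹ (-iwasawaShear M)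
  have hn := (iwasawaScale_pos hM).ne'
  have hRS : R * S = 1 := suStarMk_mul_suStarMk_inv hn _
  have hSR : S * R = 1 := suStarMk_inv_mul_suStarMk hn _
  have hgram : Mᴴ * M = Rᴴ * R := conjTranspose_mul_self_eq_suStarMk hM
  refine ⟨M * S, ?_, ?_, ?_⟩
  · calc (M * S)ᴴ * (M * S) = Sᴴ * (Mᴴ * M) * S := by
          simp only [conjTranspose_mul, Matrix.mul_assoc]
      _ = (R * S)ᴴ * (R * S) := by
          rw [hgram]
          simp only [conjTranspose_mul, Matrix.mul_assoc]
      _ = 1 := by rw [hRS, conjTranspose_one, Matrix.one_mul]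
  · rw [det_mul, hM, det_suStarMk (inv_ne_zero hn), one_mul]
  · rw [Matrix.mul_assoc, hSR, Matrix.mul_one]

theorem eq_of_unitary_mul_suStarMk_eq {U₁ U₂ : Matrix (Fin 2) (Fin 2) ℂ} {v₁ v₂ : ℝ} {z₁ z₂ : ℂ}
    (hv₁ : 0 < v₁) (hv₂ : 0 < v₂) (hU₁ : U₁ᴴ * U₁ = 1) (hU₂ : U₂ᴴ * U₂ = 1)
    (h : U₁ * suStarMk v₁ z₁ = U₂ * suStarMk v₂ z₂) : U₁ = U₂ ∧ v₁ = v₂ ∧ z₁ = z₂ := by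
  have hgram := congrArg (fun A => Aᴴ * A) h
  simp only [conjTranspose_mul_self_of_unitary_mul hU₁, conjTranspose_mul_self_of_unitary_mul hU₂,
    conjTranspose_suStarMk_mul_self] at hgram
  have hv : v₁ = v₂ := by
    have hsq : v₁ ^ 2 = v₂ ^ 2 := by
      exact_mod_cast (by simpa using congrFun (congrFun hgram 0) 0 : (v₁ : ℂ) ^ 2 = v₂ ^ 2)
    exact (pow_left_inj₀ hv₁.le hv₂.le two_ne_zero).1 hsq
  subst hv
  have hz : z₁ = z₂ :=
    mul_left_cancel₀ (ofReal_ne_zero.2 hv₁.ne') (by simpa using congrFun (congrFun hgram 0) 1)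
  subst hz
  refine ⟨?_, rfl, rfl⟩
  calc U₁ = U₁ * suStarMk v₁ z₁ * suStarMk v₁⁻¹ (-z₁) := by
        rw [Matrix.mul_assoc, suStarMk_mul_suStarMk_inv hv₁.ne', Matrix.mul_one]
    _ = U₂ := by
        rw [h, Matrix.mul_assoc, suStarMk_mul_suStarMk_inv hv₁.ne', Matrix.mul_one]

end

/-- **The dressing action of SU(2) on SU₂⋆**: for `T = [[w,z],[0,w⁻¹]]` with `w > 0` and
`U = [[x, -conj y],[y, conj x]] ∈ SU(2)` (so `|x|² + |y|² = 1`), there exist a unique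
`U' ∈ SU(2)`, `w' > 0` real and `z' ∈ ℂ` with `T·U = U'·[[w',z'],[0,w'⁻¹]]`, and moreover
`w' = sqrt(w⁻²|y|² + |wx + zy|²)` and
`w'·z' = (w·conj x + conj z·conj y)(z·conj x − w·conj y) + w⁻²·conj x·conj y`. -/
theorem dressing_action_su2
    (w : ℝ) (hw : 0 < w) (z x y : ℂ) (hxy : Complex.normSq x + Complex.normSq y = 1) :
    ∃ (U' : Matrix (Fin 2) (Fin 2) ℂ) (w' : ℝ) (z' : ℂ),
      0 < w' ∧ U'ᴴ * U' = 1 ∧ U'.det = 1 ∧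
      !![(w : ℂ), z; 0, (w : ℂ)⁻¹] * !![x, -(starRingEnd ℂ) y; y, (starRingEnd ℂ) x]
        = U' * !![(w' : ℂ), z'; 0, (w' : ℂ)⁻¹] ∧
      w' = Real.sqrt (w ^ (-2 : ℤ) * Complex.normSq y + Complex.normSq ((w : ℂ) * x + z * y)) ∧
      (w' : ℂ) * z' =
        ((w : ℂ) * (starRingEnd ℂ) x + (starRingEnd ℂ) z * (starRingEnd ℂ) y) *
            (z * (starRingEnd ℂ) x - (w : ℂ) * (starRingEnd ℂ) y)
          + ((w : ℂ)) ^ (-2 : ℤ) * (starRingEnd ℂ) x * (starRingEnd ℂ) y ∧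
      ∀ (U'' : Matrix (Fin 2) (Fin 2) ℂ) (w'' : ℝ) (z'' : ℂ),
        0 < w'' → U''ᴴ * U'' = 1 → U''.det = 1 →
        !![(w : ℂ), z; 0, (w : ℂ)⁻¹] * !![x, -(starRingEnd ℂ) y; y, (starRingEnd ℂ) x]
          = U'' * !![(w'' : ℂ), z''; 0, (w'' : ℂ)⁻¹] →
        U'' = U' ∧ w'' = w' ∧ z'' = z' := by
  set M := !![(w : ℂ), z; 0, (w : ℂ)⁻¹] * !![x, -conj y; y, conj x]
  have hM : M.det = 1 := by
    rw [det_mul, ← suStarMk, det_suStarMk hw.ne', det_fin_two_of, one_mul, neg_mul,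
      sub_neg_eq_add, mul_conj, mul_comm (conj y), mul_conj]
    exact_mod_cast hxy
  have h00 : M 0 0 = w * x + z * y := by simp [M]
  have h01 : M 0 1 = z * conj x - w * conj y := by
    simp only [M, cons_mul, vecMul_cons, smul_cons, smul_eq_mul, mul_neg, smul_empty,
      empty_vecMul, add_zero, add_cons, empty_add_empty, zero_smul, zero_add, empty_mul, of_apply,
      cons_val', cons_val_one, cons_val_fin_one, cons_val_zero, head_cons, tail_cons]
    ring
  have h10 : M 1 0 = (w : ℂ)⁻¹ * y := by simp [M]
  have h11 : M 1 1 = (w : ℂ)⁻¹ * conj x := by simp [M]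
  obtain ⟨U', hU', hU'det, hfac⟩ := exists_unitary_mul_suStarMk hM
  refine ⟨U', iwasawaScale M, iwasawaShear M, iwasawaScale_pos hM, hU', hU'det, hfac, ?_, ?_, ?_⟩
  · rw [iwasawaScale, h00, h10, normSq_mul, normSq_inv, normSq_ofReal, add_comm]
    congr 2
    simp [_root_.zpow_neg, sq]
  · rw [iwasawaScale_mul_iwasawaShear hM, h00, h01, h10, h11]
    simp only [map_add, map_mul, conj_ofReal, map_inv₀, _root_.zpow_neg, zpow_ofNat]
    ring
  · intro U'' w'' z'' hw'' hU'' _ hfac''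
    exact eq_of_unitary_mul_suStarMk_eq hw'' (iwasawaScale_pos hM) hU'' hU' (hfac''.symm.trans hfac)
end

section
/- Let λ > 0 and m ∈ ℝ. Suppose Π₀ ∈ ℝ and Π ∈ ℝ³ satisfy Π₀² + (λ²/4)|Π|² = 1, and suppose φ ∈ ℂ² is nonzero with (Π₀·I + i(λ/2)·(Π·σ))·φ = e^{−imλ/2}·φ. Then: (i) Π₀ = cos(mλ/2); (ii) (Π·σ)·φ = −(2/λ)·sin(mλ/2)·φ; and (iii) |Π|² = (4/λ²)·sin²(mλ/2). (This shows that for spin 1/2 the group-valued constraint of the quantum double model implies both the deformed Dirac equation in momentum space and the deformed mass-shell relation.) -/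
/-!
Since `(Π·σ)² = |Π|²`, the constraint makes `φ` an eigenvector of `Π·σ` whose eigenvalue `c`,
given by `i(λ/2)·c = e^{-imλ/2} - Π₀`, satisfies `c² = |Π|² ≥ 0`. A complex number with a
nonnegative real square is real, so comparing real and imaginary parts of
`i(λ/2)·c = cos(mλ/2) - i·sin(mλ/2) - Π₀` gives `Π₀ = cos(mλ/2)` and `c = -(2/λ)·sin(mλ/2)`,
and the mass shell is `|Π|² = c²`.
-/
open Matrix Complex

/-- The Pauli matrices `σ₁, σ₂, σ₃`. -/
noncomputable def pauli (a : Fin 3) : Matrix (Fin 2) (Fin 2) ℂ :=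
  ![!![0, 1; 1, 0], !![0, -Complex.I; Complex.I, 0], !![1, 0; 0, -1]] a

/-- `p·σ = p₁σ₁ + p₂σ₂ + p₃σ₃` for a real vector `p`. -/
noncomputable def pauliVec (p : Fin 3 → ℝ) : Matrix (Fin 2) (Fin 2) ℂ :=
  ∑ a : Fin 3, (p a : ℂ) • pauli a

lemma pauliVec_mul_self (p : Fin 3 → ℝ) :
    pauliVec p * pauliVec p = ((p 0 ^ 2 + p 1 ^ 2 + p 2 ^ 2 : ℝ) : ℂ) • (1 : Matrix (Fin 2) (Fin 2) ℂ) := by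
  ext i j
  fin_cases i <;> fin_cases j <;>
    simp [pauliVec, pauli, mul_apply, Fin.sum_univ_succ] <;> ring_nf <;> simp [I_sq]

namespace Matrix

variable {K n : Type*} [Field K] [Fintype n] [DecidableEq n]

lemma mulVec_eq_smul_of_smul_one_add_smul_mulVec_eq_smul {M : Matrix n n K} {v : n → K}
    {a b w : K} (hb : b ≠ 0) (h : (a • (1 : Matrix n n K) + b • M) *ᵥ v = w • v) :
    M *ᵥ v = ((w - a) / b) • v := by
  rw [add_mulVec, smul_mulVec, smul_mulVec, one_mulVec] at h
  rw [div_eq_inv_mul, mul_smul, sub_smul, ← h, add_sub_cancel_left, smul_smul, inv_mul_cancel₀ hb,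
    one_smul]

lemma sq_eq_of_mul_self_eq_smul_one {M : Matrix n n K} {v : n → K} {r c : K}
    (hM : M * M = r • (1 : Matrix n n K)) (hv : v ≠ 0) (h : M *ᵥ v = c • v) : c ^ 2 = r := by
  refine smul_left_injective K hv ?_
  calc c ^ 2 • v = M *ᵥ M *ᵥ v := by rw [h, mulVec_smul, h, smul_smul, sq]
    _ = r • v := by rw [mulVec_mulVec, hM, smul_mulVec, one_mulVec]

end Matrix

namespace Complex

lemma im_eq_zero_of_sq_eq_ofReal_nonneg {z : ℂ} {r : ℝ} (hr : 0 ≤ r) (h : z ^ 2 = r) :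
    z.im = 0 := by
  have hre := congrArg re h
  have him := congrArg im h
  simp only [sq, mul_re, mul_im, ofReal_re, ofReal_im] at hre him
  rcases mul_eq_zero.mp (show 2 * z.re * z.im = 0 by linarith) with hre0 | him0
  · nlinarith [sq_nonneg z.im, mul_eq_zero.mp hre0]
  · exact him0

lemma cos_eq_and_eq_of_I_mul_ofReal_eq_exp_sub {a b θ x : ℝ} (hb : b ≠ 0)
    (h : I * b * x = exp (-θ * I) - a) : a = Real.cos θ ∧ x = -Real.sin θ / b := by
  rw [← ofReal_neg, exp_mul_I, ← ofReal_cos, ← ofReal_sin, Real.cos_neg, Real.sin_neg] at h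
  have hre := congrArg re h
  have him := congrArg im h
  simp only [mul_re, mul_im, add_re, add_im, sub_re, sub_im, I_re, I_im, ofReal_re, ofReal_im,
    ofReal_neg, neg_re, neg_im] at hre him
  constructor
  · linarith
  · field_simp
    linarith

end Complex

theorem quantum_double_spin_half_constraint_general
    (l : ℝ) (hl : 0 < l) (m : ℝ) (P₀ : ℝ) (P : Fin 3 → ℝ)
    (φ : Fin 2 → ℂ) (hφ : φ ≠ 0)
    (hconstraint :
      ((P₀ : ℂ) • (1 : Matrix (Fin 2) (Fin 2) ℂ) + (Complex.I * (l / 2)) • pauliVec P).mulVec φ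
        = Complex.exp (-Complex.I * m * l / 2) • φ) :
    P₀ = Real.cos (m * l / 2) ∧
    (pauliVec P).mulVec φ = ((-(2 / l) * Real.sin (m * l / 2) : ℝ) : ℂ) • φ ∧
    P 0 ^ 2 + P 1 ^ 2 + P 2 ^ 2 = 4 / l ^ 2 * Real.sin (m * l / 2) ^ 2 := by
  have hb : Complex.I * (l / 2 : ℝ) ≠ 0 := by simp [hl.ne']
  have heigen := Matrix.mulVec_eq_smul_of_smul_one_add_smul_mulVec_eq_smul hb
    (by push_cast; exact hconstraint)
  generalize hc : (Complex.exp (-Complex.I * m * l / 2) - P₀) / (Complex.I * (l / 2 : ℝ)) = c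
    at heigen
  have hc2 := Matrix.sq_eq_of_mul_self_eq_smul_one (pauliVec_mul_self P) hφ heigen
  lift c to ℝ using Complex.im_eq_zero_of_sq_eq_ofReal_nonneg (by positivity) hc2
  obtain ⟨hP₀, rfl⟩ := Complex.cos_eq_and_eq_of_I_mul_ofReal_eq_exp_sub
    (a := P₀) (b := l / 2) (θ := m * l / 2) (by positivity) <| by
    rw [← hc, mul_div_cancel₀ _ hb]; push_cast; ring_nf
  have hsq : (-Real.sin (m * l / 2) / (l / 2)) ^ 2 = P 0 ^ 2 + P 1 ^ 2 + P 2 ^ 2 := by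
    exact_mod_cast hc2
  refine ⟨hP₀, ?_, ?_⟩
  · rw [heigen]; congr 2; field_simp
  · rw [← hsq]; field_simp; ring

/-- **Spin-1/2 constraint in the quantum double model**: if `u = Π₀·I + i(λ/2)(Π·σ) ∈ SU(2)`
(so `Π₀² + (λ²/4)|Π|² = 1`) and `u φ = e^{−imλ/2} φ` for a nonzero `φ ∈ ℂ²`, then
`Π₀ = cos(mλ/2)`, `(Π·σ)φ = −(2/λ)sin(mλ/2)·φ`, and `|Π|² = (4/λ²)sin²(mλ/2)`. -/
theorem quantum_double_spin_half_constraint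
    (l : ℝ) (hl : 0 < l) (m : ℝ) (P₀ : ℝ) (P : Fin 3 → ℝ)
    (hsphere : P₀ ^ 2 + l ^ 2 / 4 * (P 0 ^ 2 + P 1 ^ 2 + P 2 ^ 2) = 1)
    (φ : Fin 2 → ℂ) (hφ : φ ≠ 0)
    (hconstraint :
      ((P₀ : ℂ) • (1 : Matrix (Fin 2) (Fin 2) ℂ) + (Complex.I * (l / 2)) • pauliVec P).mulVec φ
        = Complex.exp (-Complex.I * m * l / 2) • φ) :
    P₀ = Real.cos (m * l / 2) ∧
    (pauliVec P).mulVec φ = ((-(2 / l) * Real.sin (m * l / 2) : ℝ) : ℂ) • φ ∧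
    P 0 ^ 2 + P 1 ^ 2 + P 2 ^ 2 = 4 / l ^ 2 * Real.sin (m * l / 2) ^ 2 :=
  quantum_double_spin_half_constraint_general l hl m P₀ P φ hφ hconstraint
end

section
/- Let λ > 0 and m ∈ ℝ with e^{−imλ} ≠ 1 and cos(mλ/2) ≠ 0. Set Π₀ = cos(mλ/2), and let Π ∈ ℝ³ satisfy Π₀² + (λ²/4)|Π|² = 1. Suppose φ ∈ ℂ³ satisfies (1 − (λ²/2)|Π|²)·φ − λ·Π₀·(Π × φ) + (λ²/2)·(Π·φ)·Π = e^{−imλ}·φ. Then Π·φ = 0 and Π × φ = (2i/λ)·sin(mλ/2)·φ. (For spin 1, the group-valued constraint of the quantum double model implies transversality and the deformed spin-1 wave equation in momentum space.) -/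
open Complex

/-- The Levi-Civita symbol on three indices, `ε₁₂₃ = 1` (indices `0,1,2` here). -/
def eps (a b c : Fin 3) : ℤ :=
  (((b : ℕ) : ℤ) - ((a : ℕ) : ℤ)) * (((c : ℕ) : ℤ) - ((a : ℕ) : ℤ))
    * (((c : ℕ) : ℤ) - ((b : ℕ) : ℤ)) / 2

/-- The cross product `Π × φ` of a real vector with a complex vector, componentwise. -/
noncomputable def crossRC (P : Fin 3 → ℝ) (φ : Fin 3 → ℂ) : Fin 3 → ℂ :=
  fun a => ∑ b : Fin 3, ∑ c : Fin 3, (eps a b c : ℂ) * (P b : ℂ) * φ c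

/-!
Dotting the constraint with `Π` kills the cross product and the `|Π|²` terms cancel, leaving
`Π·φ = e^{−imλ} Π·φ`, so `Π·φ = 0` since `e^{−imλ} ≠ 1`. What remains is
`(1 − (λ²/2)|Π|²)φ − λΠ₀(Π × φ) = e^{−imλ}φ`. On the sphere `1 − (λ²/2)|Π|² = 2Π₀² − 1 = cos(mλ)`,
and `e^{−imλ} = cos(mλ) − 2i sin(mλ/2)Π₀`, so `λΠ₀(Π × φ) = 2i sin(mλ/2)Π₀ φ`; divide by `λΠ₀ ≠ 0`.
-/

section CrossProduct

variable (P : Fin 3 → ℝ) (φ : Fin 3 → ℂ)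

@[simp]
lemma crossRC_zero : crossRC P φ 0 = P 1 * φ 2 - P 2 * φ 1 := by
  simp [crossRC, Fin.sum_univ_three, eps]; ring

@[simp]
lemma crossRC_one : crossRC P φ 1 = P 2 * φ 0 - P 0 * φ 2 := by
  simp [crossRC, Fin.sum_univ_three, eps]; ring

@[simp]
lemma crossRC_two : crossRC P φ 2 = P 0 * φ 1 - P 1 * φ 0 := by
  simp [crossRC, Fin.sum_univ_three, eps]; ring

lemma sum_mul_crossRC_self : ∑ a : Fin 3, (P a : ℂ) * crossRC P φ a = 0 := by
  simp only [Fin.sum_univ_three, crossRC_zero, crossRC_one, crossRC_two]; ring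

end CrossProduct

lemma exp_neg_two_mul_mul_I (θ : ℂ) :
    exp (-(2 * θ) * I) = (2 * cos θ ^ 2 - 1) - 2 * I * sin θ * cos θ := by
  rw [exp_mul_I, cos_neg, sin_neg, cos_two_mul, sin_two_mul]
  ring

section Constraint

variable (l P₀ : ℝ) (P : Fin 3 → ℝ) (φ : Fin 3 → ℂ) {E : ℂ}

/-- `u (φ·σ) u⁻¹ = adAction l P₀ P φ · σ` for `u = P₀ + i(l/2)(P·σ)` on the sphere
`P₀² + (l²/4)|P|² = 1`. -/
noncomputable def adAction : Fin 3 → ℂ := fun a =>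
  ((1 - l ^ 2 / 2 * (P 0 ^ 2 + P 1 ^ 2 + P 2 ^ 2) : ℝ) : ℂ) * φ a
    - ((l * P₀ : ℝ) : ℂ) * crossRC P φ a
    + ((l ^ 2 / 2 : ℝ) : ℂ) * (∑ b : Fin 3, (P b : ℂ) * φ b) * (P a : ℂ)

lemma dot_eq_zero_of_constraint (hE : E ≠ 1)
    (h : ∀ a, adAction l P₀ P φ a = E * φ a) :
    ∑ b : Fin 3, (P b : ℂ) * φ b = 0 := by
  have hperp := sum_mul_crossRC_self P φ
  have key : (E - 1) * ∑ b : Fin 3, (P b : ℂ) * φ b = 0 := by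
    simp only [adAction, Fin.sum_univ_three] at hperp h ⊢
    push_cast at h
    linear_combination -(P 0 : ℂ) * h 0 - (P 1 : ℂ) * h 1 - (P 2 : ℂ) * h 2 - (l * P₀ : ℂ) * hperp
  exact (mul_eq_zero.mp key).resolve_left (sub_ne_zero.mpr hE)

lemma crossRC_eq_of_constraint (hl : l ≠ 0) (hP₀ : P₀ ≠ 0) {σ : ℝ}
    (hsphere : P₀ ^ 2 + l ^ 2 / 4 * (P 0 ^ 2 + P 1 ^ 2 + P 2 ^ 2) = 1)
    (hE : E = (2 * P₀ ^ 2 - 1) - 2 * I * σ * P₀)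
    (hdot : ∑ b : Fin 3, (P b : ℂ) * φ b = 0) (a : Fin 3)
    (h : adAction l P₀ P φ a = E * φ a) :
    crossRC P φ a = (2 * I / (l : ℂ)) * σ * φ a := by
  have hsphereC : (P₀ : ℂ) ^ 2 + l ^ 2 / 4 * (P 0 ^ 2 + P 1 ^ 2 + P 2 ^ 2) = 1 := by
    exact_mod_cast congrArg ofReal hsphere
  have key : (P₀ : ℂ) * (l * crossRC P φ a - 2 * I * σ * φ a) = 0 := by
    rw [adAction, hdot] at h
    push_cast at h
    linear_combination -h - 2 * φ a * hsphereC - φ a * hE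
  have hl' : (l : ℂ) ≠ 0 := ofReal_ne_zero.mpr hl
  have hcross := sub_eq_zero.mp ((mul_eq_zero.mp key).resolve_left (ofReal_ne_zero.mpr hP₀))
  field_simp
  linear_combination hcross

end Constraint

/-- **Spin-1 constraint in the quantum double model**: with `λ > 0`, `e^{−imλ} ≠ 1`,
`cos(mλ/2) ≠ 0`, `Π₀ = cos(mλ/2)` and `Π₀² + (λ²/4)|Π|² = 1`, any `φ ∈ ℂ³` satisfying
`(1 − (λ²/2)|Π|²)φ − λΠ₀(Π × φ) + (λ²/2)(Π·φ)Π = e^{−imλ}φ` is transversal, `Π·φ = 0`,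
and satisfies the deformed spin-1 wave equation `Π × φ = (2i/λ)sin(mλ/2)·φ`. -/
theorem quantum_double_spin_one_constraint
    (l : ℝ) (hl : 0 < l) (m : ℝ)
    (hexp : Complex.exp (-Complex.I * m * l) ≠ 1)
    (hcos : Real.cos (m * l / 2) ≠ 0)
    (P₀ : ℝ) (hP₀ : P₀ = Real.cos (m * l / 2))
    (P : Fin 3 → ℝ)
    (hsphere : P₀ ^ 2 + l ^ 2 / 4 * (P 0 ^ 2 + P 1 ^ 2 + P 2 ^ 2) = 1)
    (φ : Fin 3 → ℂ)
    (hconstraint : ∀ a : Fin 3,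
      ((1 - l ^ 2 / 2 * (P 0 ^ 2 + P 1 ^ 2 + P 2 ^ 2) : ℝ) : ℂ) * φ a
          - ((l * P₀ : ℝ) : ℂ) * crossRC P φ a
          + ((l ^ 2 / 2 : ℝ) : ℂ) * (∑ b : Fin 3, (P b : ℂ) * φ b) * (P a : ℂ)
        = Complex.exp (-Complex.I * m * l) * φ a) :
    (∑ b : Fin 3, (P b : ℂ) * φ b) = 0 ∧
    ∀ a : Fin 3,
      crossRC P φ a = (2 * Complex.I / (l : ℂ)) * (Real.sin (m * l / 2) : ℂ) * φ a := by
  have hE : exp (-I * m * l) = (2 * P₀ ^ 2 - 1) - 2 * I * Real.sin (m * l / 2) * P₀ := by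
    rw [hP₀, show -I * m * l = -(2 * ((m * l / 2 : ℝ) : ℂ)) * I by push_cast; ring,
      exp_neg_two_mul_mul_I, ofReal_cos, ofReal_sin]
  have hdot := dot_eq_zero_of_constraint l P₀ P φ hexp hconstraint
  exact ⟨hdot, fun a => crossRC_eq_of_constraint l P₀ P φ hl.ne' (hP₀ ▸ hcos) hsphere hE
    hdot a (hconstraint a)⟩
end

section
/- Let V be a complex vector space and let D₁, D₂, D₃ be linear endomorphisms of V satisfying [D_a, D_b] = Σ_c ε_{abc} D_c for all a, b. Let k be a real number with k > 0 and let φ = (φ₁, φ₂, φ₃) ∈ V³ satisfy Σ_{a,c} ε_{abc} D_a(φ_c) = k·φ_b for all b ∈ {1,2,3}. Then Σ_{c=1}^{3} D_c(φ_c) = 0. (For spin 1, the first order constraint automatically implies the divergence-free condition ξ^L_c φ_c = 0.) -/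
/-!
Applying `D_b` to the constraint and summing over `b` gives `k Σ_c D_c φ_c` on one side; on the
other side the divergence of the curl does not vanish as for commuting derivatives: the commutation
relations make `Σ_{a,b} ε_{abc} D_b D_a = -D_c`, so it equals `-Σ_c D_c φ_c`. Hence
`(k + 1) Σ_c D_c φ_c = 0`.
-/

section

variable {R A V : Type*} [CommRing R] [Ring A] [Algebra R A] [AddCommGroup V] [Module R V]

theorem sum_eps_smul_mul_swap {D : Fin 3 → A}
    (hD : ∀ a b : Fin 3, ⁅D a, D b⁆ = ∑ c : Fin 3, (eps a b c : R) • D c) (c : Fin 3) :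
    ∑ a : Fin 3, ∑ b : Fin 3, (eps a b c : R) • (D b * D a) = -D c := by
  have h01 := hD 0 1
  have h12 := hD 1 2
  have h20 := hD 2 0
  simp only [Fin.sum_univ_three, Ring.lie_def] at h01 h12 h20 ⊢
  fin_cases c <;> norm_num [eps] at h01 h12 h20 ⊢
  · rw [← h12]; abel
  · rw [← h20]; abel
  · rw [show (⟨2, by decide⟩ : Fin 3) = 2 from rfl, ← h01]; abel

def curl (D : Fin 3 → Module.End R V) (φ : Fin 3 → V) (b : Fin 3) : V :=
  ∑ a : Fin 3, ∑ c : Fin 3, (eps a b c : R) • D a (φ c)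

def divergence (D : Fin 3 → Module.End R V) (φ : Fin 3 → V) : V :=
  ∑ c : Fin 3, D c (φ c)

theorem divergence_smul (D : Fin 3 → Module.End R V) (r : R) (φ : Fin 3 → V) :
    divergence D (r • φ) = r • divergence D φ := by
  simp only [divergence, Pi.smul_apply, map_smul, Finset.smul_sum]

theorem divergence_curl_eq_sum_apply (D : Fin 3 → Module.End R V) (φ : Fin 3 → V) :
    divergence D (curl D φ) =
      ∑ c : Fin 3, (∑ a : Fin 3, ∑ b : Fin 3, (eps a b c : R) • (D b * D a)) (φ c) := by
  simp only [divergence, curl, map_sum, map_smul, LinearMap.sum_apply, LinearMap.smul_apply,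
    Module.End.mul_apply]
  rw [Finset.sum_comm]
  exact Finset.sum_comm_cycle

theorem divergence_curl {D : Fin 3 → Module.End R V}
    (hD : ∀ a b : Fin 3, ⁅D a, D b⁆ = ∑ c : Fin 3, (eps a b c : R) • D c) (φ : Fin 3 → V) :
    divergence D (curl D φ) = -divergence D φ := by
  rw [divergence_curl_eq_sum_apply]
  simp only [sum_eps_smul_mul_swap hD, LinearMap.neg_apply, Finset.sum_neg_distrib, divergence]

end

/-- **Spin-1 first-order constraint implies divergence-free**: if `D₁, D₂, D₃` satisfy
`[D_a, D_b] = ε_{abc} D_c` and `φ = (φ₁, φ₂, φ₃)` satisfies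
`Σ_{a,c} ε_{abc} D_a φ_c = k φ_b` with `k > 0`, then `Σ_c D_c φ_c = 0`. -/
theorem spin_one_constraint_divergence_free
    (V : Type*) [AddCommGroup V] [Module ℂ V]
    (D : Fin 3 → Module.End ℂ V)
    (hD : ∀ a b : Fin 3, ⁅D a, D b⁆ = ∑ c : Fin 3, ((eps a b c : ℂ) • D c))
    (k : ℝ) (hk : 0 < k) (φ : Fin 3 → V)
    (hφ : ∀ b : Fin 3,
      ∑ a : Fin 3, ∑ c : Fin 3, (eps a b c : ℂ) • (D a) (φ c) = (k : ℂ) • φ b) :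
    ∑ c : Fin 3, (D c) (φ c) = 0 := by
  have hcurl : curl D φ = (k : ℂ) • φ := funext hφ
  have hsum : ((k : ℂ) + 1) • divergence D φ = 0 := by
    rw [add_smul, one_smul, ← divergence_smul, ← hcurl, divergence_curl hD, neg_add_cancel]
  have hk1 : (k : ℂ) + 1 ≠ 0 := by exact_mod_cast (by linarith : k + 1 ≠ 0)
  exact (smul_eq_zero.mp hsum).resolve_left hk1
end

section
/- Let V be a complex vector space and let D₁, D₂, D₃ be linear endomorphisms of V satisfying [D_a, D_b] = Σ_c ε_{abc} D_c for all a, b. Let k be a real number with k > 0 and let φ = (φ₁, φ₂, φ₃) ∈ V³ satisfy Σ_{a,c} ε_{abc} D_a(φ_c) = k·φ_b for all b ∈ {1,2,3}. Then Σ_{a=1}^{3} D_a²(φ_b) = −k(k+1)·φ_b for all b ∈ {1,2,3}. (This is the spin-1 case: the first-order constraint forces the quadratic Casimir eigenvalue k(k+1), i.e. the wave equation ((ξ^R)² + k(k+1))φ = 0.) -/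
namespace SpinOne

variable {R V : Type*} [CommRing R] [AddCommGroup V] [Module R V]

def curl (D : Fin 3 → Module.End R V) (φ : Fin 3 → V) (b : Fin 3) : V :=
  ∑ a, ∑ c, (eps a b c : R) • D a (φ c)

def divergence (D : Fin 3 → Module.End R V) (φ : Fin 3 → V) : V :=
  ∑ a, D a (φ a)

def casimir (D : Fin 3 → Module.End R V) : Module.End R V :=
  ∑ a, D a * D a

variable {D : Fin 3 → Module.End R V}

theorem lie_cyclic_of_eps
    (hD : ∀ a b : Fin 3, ⁅D a, D b⁆ = ∑ c : Fin 3, (eps a b c : R) • D c) :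
    ⁅D 0, D 1⁆ = D 2 ∧ ⁅D 1, D 2⁆ = D 0 ∧ ⁅D 2, D 0⁆ = D 1 := by
  simp [hD, Fin.sum_univ_three, eps]

theorem curl_apply_zero (φ : Fin 3 → V) : curl D φ 0 = D 2 (φ 1) - D 1 (φ 2) := by
  norm_num [curl, Fin.sum_univ_three, eps, sub_eq_add_neg, add_comm]

theorem curl_apply_one (φ : Fin 3 → V) : curl D φ 1 = D 0 (φ 2) - D 2 (φ 0) := by
  norm_num [curl, Fin.sum_univ_three, eps, sub_eq_add_neg, add_comm]

theorem curl_apply_two (φ : Fin 3 → V) : curl D φ 2 = D 1 (φ 0) - D 0 (φ 1) := by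
  norm_num [curl, Fin.sum_univ_three, eps, sub_eq_add_neg, add_comm]

theorem curl_smul (r : R) (φ : Fin 3 → V) : curl D (r • φ) = r • curl D φ := by
  ext b
  simp only [curl, Pi.smul_apply, map_smul, smul_comm _ r, Finset.smul_sum]

theorem apply_sub_apply_of_lie_eq {X Y Z : Module.End R V} (h : ⁅X, Y⁆ = Z) (x : V) :
    X (Y x) - Y (X x) = Z x := by
  simp [← h, Ring.lie_def]

theorem divergence_curl (h01 : ⁅D 0, D 1⁆ = D 2) (h12 : ⁅D 1, D 2⁆ = D 0)
    (h20 : ⁅D 2, D 0⁆ = D 1) (φ : Fin 3 → V) :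
    divergence D (curl D φ) = -divergence D φ := by
  simp only [divergence, Fin.sum_univ_three, curl_apply_zero, curl_apply_one, curl_apply_two,
    map_sub]
  linear_combination (norm := module) -apply_sub_apply_of_lie_eq h12 (φ 0) -
    apply_sub_apply_of_lie_eq h20 (φ 1) - apply_sub_apply_of_lie_eq h01 (φ 2)

theorem curl_curl (h01 : ⁅D 0, D 1⁆ = D 2) (h12 : ⁅D 1, D 2⁆ = D 0)
    (h20 : ⁅D 2, D 0⁆ = D 1) (φ : Fin 3 → V) (b : Fin 3) :
    curl D (curl D φ) b = D b (divergence D φ) - curl D φ b - casimir D (φ b) := by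
  fin_cases b <;>
    simp only [Fin.zero_eta, Fin.mk_one, Fin.reduceFinMk, casimir, divergence, Fin.sum_univ_three,
      curl_apply_zero, curl_apply_one, curl_apply_two, map_sub, map_add, LinearMap.add_apply,
      Module.End.mul_apply]
  · linear_combination (norm := module)
      apply_sub_apply_of_lie_eq h20 (φ 2) - apply_sub_apply_of_lie_eq h01 (φ 1)
  · linear_combination (norm := module)
      apply_sub_apply_of_lie_eq h01 (φ 0) - apply_sub_apply_of_lie_eq h12 (φ 2)
  · linear_combination (norm := module)
      apply_sub_apply_of_lie_eq h12 (φ 1) - apply_sub_apply_of_lie_eq h20 (φ 0)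

theorem divergence_smul (r : R) (φ : Fin 3 → V) :
    divergence D (r • φ) = r • divergence D φ := by
  simp only [divergence, Pi.smul_apply, map_smul, Finset.smul_sum]

theorem divergence_eq_zero_of_curl_eq_smul [IsDomain R] [Module.IsTorsionFree R V]
    (h01 : ⁅D 0, D 1⁆ = D 2) (h12 : ⁅D 1, D 2⁆ = D 0) (h20 : ⁅D 2, D 0⁆ = D 1)
    {k : R} (hk : k + 1 ≠ 0) {φ : Fin 3 → V}
    (hφ : curl D φ = k • φ) : divergence D φ = 0 := by
  have h := divergence_curl h01 h12 h20 φ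
  rw [hφ, divergence_smul] at h
  have hk1 : (k + 1) • divergence D φ = 0 := by linear_combination (norm := module) h
  exact (smul_eq_zero_iff_right hk).mp hk1

theorem casimir_apply_eq_of_curl_eq_smul [IsDomain R] [Module.IsTorsionFree R V]
    (h01 : ⁅D 0, D 1⁆ = D 2) (h12 : ⁅D 1, D 2⁆ = D 0) (h20 : ⁅D 2, D 0⁆ = D 1)
    {k : R} (hk : k + 1 ≠ 0) {φ : Fin 3 → V}
    (hφ : curl D φ = k • φ) (b : Fin 3) : casimir D (φ b) = -(k * (k + 1)) • φ b := by
  have h := curl_curl h01 h12 h20 φ b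
  rw [hφ, curl_smul, hφ, divergence_eq_zero_of_curl_eq_smul h01 h12 h20 hk hφ, map_zero] at h
  simp only [Pi.smul_apply] at h
  linear_combination (norm := module) h

end SpinOne

/-- **Spin-1 first-order constraint forces the Casimir eigenvalue**: if `D₁, D₂, D₃` satisfy
`[D_a, D_b] = ε_{abc} D_c` and `φ = (φ₁, φ₂, φ₃)` satisfies
`Σ_{a,c} ε_{abc} D_a φ_c = k φ_b` with `k > 0`, then `Σ_a D_a² φ_b = −k(k+1) φ_b` for all
`b`. -/
theorem spin_one_constraint_casimir
    (V : Type*) [AddCommGroup V] [Module ℂ V]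
    (D : Fin 3 → Module.End ℂ V)
    (hD : ∀ a b : Fin 3, ⁅D a, D b⁆ = ∑ c : Fin 3, ((eps a b c : ℂ) • D c))
    (k : ℝ) (hk : 0 < k) (φ : Fin 3 → V)
    (hφ : ∀ b : Fin 3,
      ∑ a : Fin 3, ∑ c : Fin 3, (eps a b c : ℂ) • (D a) (φ c) = (k : ℂ) • φ b) :
    ∀ b : Fin 3,
      ∑ a : Fin 3, (D a) ((D a) (φ b)) = ((-(k * (k + 1)) : ℝ) : ℂ) • φ b := by
  intro b
  obtain ⟨h01, h12, h20⟩ := SpinOne.lie_cyclic_of_eps hD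
  have hk1 : (k : ℂ) + 1 ≠ 0 := by exact_mod_cast (by linarith : k + 1 ≠ 0)
  have h := SpinOne.casimir_apply_eq_of_curl_eq_smul h01 h12 h20 hk1 (funext hφ) b
  simpa [SpinOne.casimir] using h
end

section
/- Let ψ : SU(2) → ℂ satisfy the spin-1/2 equivariance property ψ(v · diag(e^{iα/2}, e^{−iα/2})) = e^{iα/2}·ψ(v) for all v ∈ SU(2) and all α ∈ ℝ. If v₁, v₂ ∈ SU(2) satisfy v₁ σ₃ v₁⁻¹ = v₂ σ₃ v₂⁻¹, then ψ(v₁)·(v₁ e₂) = ψ(v₂)·(v₂ e₂) in ℂ², where e₂ = (0,1)ᵀ. (Hence the vector-valued function φ̃(p) := ψ(v)·ρ^{1/2}(v)|1/2,−1/2⟩, with p determined by p·σ = m·v σ₃ v⁻¹, is well-defined on the sphere S²_m, i.e. it depends only on p and not on the choice of v.) -/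
open Matrix Complex

/-- The third Pauli matrix `σ₃`. -/
noncomputable def pauli3 : Matrix (Fin 2) (Fin 2) ℂ := !![1, 0; 0, -1]

/-!
If `v₁ σ₃ v₁⁻¹ = v₂ σ₃ v₂⁻¹`, then `u = v₁⁻¹ v₂` is an element of `SU(2)` commuting with `σ₃`,
hence diagonal, hence `u = diag(e^{iα/2}, e^{−iα/2})` for some real `α`. Writing `v₂ = v₁ u`,
the equivariance multiplies `ψ` by `e^{iα/2}`, while `v e₂` is multiplied by `e^{−iα/2}` because
`e₂` has weight `−1/2`; the two phases cancel.
-/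

/-- `e^{iα t₃}` with `t₃ = σ₃ / 2`. -/
noncomputable def torusElement (α : ℝ) : Matrix (Fin 2) (Fin 2) ℂ :=
  !![exp (I * α / 2), 0; 0, exp (-I * α / 2)]

theorem torusElement_mulVec_lowestWeight (α : ℝ) :
    torusElement α *ᵥ ![0, 1] = exp (-I * α / 2) • ![0, 1] := by
  ext i
  fin_cases i <;> simp [torusElement]

theorem Matrix.commute_inv_mul_of_conj_eq {n R : Type*} [Fintype n] [DecidableEq n] [CommRing R]
    {A v₁ v₂ : Matrix n n R} (h₁ : IsUnit v₁.det) (h₂ : IsUnit v₂.det)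
    (h : v₁ * A * v₁⁻¹ = v₂ * A * v₂⁻¹) : Commute (v₁⁻¹ * v₂) A :=
  calc v₁⁻¹ * v₂ * A = v₁⁻¹ * (v₂ * A * v₂⁻¹) * v₂ := by
        simp only [Matrix.mul_assoc, nonsing_inv_mul _ h₂, Matrix.mul_one]
    _ = v₁⁻¹ * (v₁ * A * v₁⁻¹) * v₂ := by rw [h]
    _ = A * (v₁⁻¹ * v₂) := by
        simp only [Matrix.mul_assoc, nonsing_inv_mul_cancel_left _ _ h₁]

theorem Matrix.inv_mul_mem_specialUnitaryGroup {n R : Type*} [Fintype n] [DecidableEq n]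
    [CommRing R] [StarRing R] {A B : Matrix n n R} (hA : A ∈ specialUnitaryGroup n R)
    (hB : B ∈ specialUnitaryGroup n R) : A⁻¹ * B ∈ specialUnitaryGroup n R := by
  rw [inv_eq_left_inv (mem_unitaryGroup_iff'.1 (mem_specialUnitaryGroup_iff.1 hA).1)]
  exact Submonoid.mul_mem _ (star (⟨A, hA⟩ : specialUnitaryGroup n R)).2 hB

theorem eq_diag_of_commute_pauli3 {u : Matrix (Fin 2) (Fin 2) ℂ} (hu : Commute u pauli3) :
    u = !![u 0 0, 0; 0, u 1 1] := by
  have h01 : u 0 1 = 0 := self_eq_neg.1 <| by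
    simpa [pauli3, mul_apply, Fin.sum_univ_two] using (congrFun (congrFun hu.eq 0) 1).symm
  have h10 : u 1 0 = 0 := self_eq_neg.1 <| by
    simpa [pauli3, mul_apply, Fin.sum_univ_two] using congrFun (congrFun hu.eq 1) 0
  conv_lhs => rw [eta_fin_two u, h01, h10]

theorem exists_exp_I_mul_half_eq {a : ℂ} (ha : ‖a‖ = 1) : ∃ α : ℝ, exp (I * α / 2) = a :=
  ⟨2 * arg a, by
    simpa [ha, mul_comm, mul_div_assoc] using norm_mul_exp_arg_mul_I a⟩

theorem exists_eq_torusElement_of_commute_pauli3 {u : Matrix (Fin 2) (Fin 2) ℂ}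
    (hu : u ∈ specialUnitaryGroup (Fin 2) ℂ) (hc : Commute u pauli3) :
    ∃ α : ℝ, u = torusElement α := by
  obtain ⟨hunit, hdet⟩ := mem_specialUnitaryGroup_iff.1 hu
  have hdiag := eq_diag_of_commute_pauli3 hc
  have hprod : u 0 0 * u 1 1 = 1 := by
    rwa [hdiag, det_fin_two_of, mul_zero, sub_zero] at hdet
  have hnorm : ‖u 0 0‖ = 1 := by
    have h₀ := entry_norm_bound_of_unitary hunit 0 0
    have h₁ := entry_norm_bound_of_unitary hunit 1 1
    have : ‖u 0 0‖ * ‖u 1 1‖ = 1 := by rw [← norm_mul, hprod, norm_one]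
    nlinarith [norm_nonneg (u 0 0), norm_nonneg (u 1 1)]
  obtain ⟨α, hα⟩ := exists_exp_I_mul_half_eq hnorm
  refine ⟨α, hdiag.trans ?_⟩
  have hd : u 1 1 = exp (-I * α / 2) := by
    rw [neg_mul, neg_div, Complex.exp_neg, hα]
    exact eq_inv_of_mul_eq_one_right hprod
  rw [torusElement, hα, hd]

/-- **Well-definedness of the spin-1/2 monopole section**: if `ψ : SU(2) → ℂ` satisfies the
equivariance `ψ(v·diag(e^{iα/2}, e^{−iα/2})) = e^{iα/2} ψ(v)`, and `v₁, v₂ ∈ SU(2)` satisfy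
`v₁ σ₃ v₁⁻¹ = v₂ σ₃ v₂⁻¹`, then `ψ(v₁)·(v₁ e₂) = ψ(v₂)·(v₂ e₂)` in `ℂ²`, where
`e₂ = (0,1)ᵀ` is the lowest weight vector of the defining representation. -/
theorem monopole_section_well_defined
    (ψ : Matrix (Fin 2) (Fin 2) ℂ → ℂ)
    (hequiv : ∀ v : Matrix (Fin 2) (Fin 2) ℂ, vᴴ * v = 1 → v.det = 1 → ∀ α : ℝ,
      ψ (v * !![Complex.exp (Complex.I * α / 2), 0; 0, Complex.exp (-Complex.I * α / 2)])
        = Complex.exp (Complex.I * α / 2) * ψ v)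
    (v₁ v₂ : Matrix (Fin 2) (Fin 2) ℂ)
    (hv₁ : v₁ᴴ * v₁ = 1) (hdv₁ : v₁.det = 1)
    (hv₂ : v₂ᴴ * v₂ = 1) (hdv₂ : v₂.det = 1)
    (horbit : v₁ * pauli3 * v₁⁻¹ = v₂ * pauli3 * v₂⁻¹) :
    ψ v₁ • v₁.mulVec ![0, 1] = ψ v₂ • v₂.mulVec ![0, 1] := by
  have hSU₁ : v₁ ∈ specialUnitaryGroup (Fin 2) ℂ :=
    mem_specialUnitaryGroup_iff.2 ⟨mem_unitaryGroup_iff'.2 hv₁, hdv₁⟩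
  have hSU₂ : v₂ ∈ specialUnitaryGroup (Fin 2) ℂ :=
    mem_specialUnitaryGroup_iff.2 ⟨mem_unitaryGroup_iff'.2 hv₂, hdv₂⟩
  have hdet₁ : IsUnit v₁.det := hdv₁ ▸ isUnit_one
  obtain ⟨α, hα⟩ := exists_eq_torusElement_of_commute_pauli3
    (inv_mul_mem_specialUnitaryGroup hSU₁ hSU₂)
    (commute_inv_mul_of_conj_eq hdet₁ (hdv₂ ▸ isUnit_one) horbit)
  have hfactor : v₂ = v₁ * torusElement α := by rw [← hα, mul_nonsing_inv_cancel_left _ _ hdet₁]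
  have hphases : exp (I * α / 2) * exp (-I * α / 2) = 1 := by
    rw [← exp_add, ← add_div, neg_mul, add_neg_cancel, zero_div, exp_zero]
  rw [hfactor, ← mulVec_mulVec, torusElement_mulVec_lowestWeight, mulVec_smul, smul_smul,
    torusElement, hequiv v₁ hv₁ hdv₁ α, mul_right_comm, hphases, one_mul]
end
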